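/- The Journé set E_J = [−32π/7, −4π) ∪ [−π, −4π/7) ∪ [4π/7, π) ∪ [4π, 32π/7) is a wavelet set: it is 2π-translation congruent to [0,2π) and 2-dilation congruent to [−2π,−π) ∪ [π,2π), both modulo null sets. -/
import Mathlib


open MeasureTheory Set Real

/-- Translation congruence modulo `2π`. -/
def TranslationCongruent (E F : Set ℝ) : Prop :=
  ∃ φ : ℝ → ℝ, Measurable φ ∧ Set.BijOn φ E F ∧ ∀ s ∈ E, ∃ k : ℤ, φ s = s + 2 * π * k

/-- Dilation congruence modulo `2`. -/
def DilationCongruent (G H : Set ℝ) : Prop :=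
  ∃ τ : ℝ → ℝ, Measurable τ ∧ Set.BijOn τ G H ∧ ∀ s ∈ G, ∃ n : ℤ, τ s = (2 : ℝ) ^ n * s

/-- The Journé set `E_J = [−32π/7, −4π) ∪ [−π, −4π/7) ∪ [4π/7, π) ∪ [4π, 32π/7)`. -/
def JourneSet : Set ℝ :=
  Set.Ico (-(32 * π / 7)) (-(4 * π)) ∪ Set.Ico (-π) (-(4 * π / 7)) ∪
    Set.Ico (4 * π / 7) π ∪ Set.Ico (4 * π) (32 * π / 7)

noncomputable def phiT (x : ℝ) : ℝ :=
  if x < -π then x + 6*π else if x < 0 then x + 2*π else if x < 4*π then x else x - 4*π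

noncomputable def psiT (y : ℝ) : ℝ :=
  if y < 4*π/7 then y + 4*π else if y < π then y else if y < 10*π/7 then y - 2*π else y - 6*π

noncomputable def phiD (x : ℝ) : ℝ :=
  if x < -4*π then x/4 else if x < 0 then 2*x else if x < π then 2*x else x/4

noncomputable def psiD (y : ℝ) : ℝ :=
  if y < -8*π/7 then y/2 else if y < 0 then 4*y else if y < 8*π/7 then 4*y else y/2

lemma phiT_meas : Measurable phiT :=
  Measurable.ite (measurableSet_lt measurable_id measurable_const)
    (measurable_id.add_const _)
    (Measurable.ite (measurableSet_lt measurable_id measurable_const)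
      (measurable_id.add_const _)
      (Measurable.ite (measurableSet_lt measurable_id measurable_const)
        measurable_id (measurable_id.sub_const _)))

lemma phiD_meas : Measurable phiD :=
  Measurable.ite (measurableSet_lt measurable_id measurable_const)
    (measurable_id.div_const _)
    (Measurable.ite (measurableSet_lt measurable_id measurable_const)
      (measurable_id.const_mul _)
      (Measurable.ite (measurableSet_lt measurable_id measurable_const)
        (measurable_id.const_mul _) (measurable_id.div_const _)))

set_option maxHeartbeats 2000000 in
/-- The Journé set is a wavelet set: it is `2π`-translation congruent to `[0,2π)` and
`2`-dilation congruent to `[−2π,−π) ∪ [π,2π)`, both modulo null sets. -/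
theorem stmt_14 :
    (∃ A : Set ℝ, MeasurableSet A ∧ volume (symmDiff JourneSet A) = 0 ∧
        TranslationCongruent A (Set.Ico 0 (2 * π))) ∧
    (∃ B : Set ℝ, MeasurableSet B ∧ volume (symmDiff JourneSet B) = 0 ∧
        DilationCongruent B (Set.Ico (-(2 * π)) (-π) ∪ Set.Ico π (2 * π))) := by
  have hπ := Real.pi_pos
  have hJmeas : MeasurableSet JourneSet := by
    unfold JourneSet
    exact (((measurableSet_Ico.union measurableSet_Ico).union measurableSet_Ico).union
      measurableSet_Ico)
  have hnull : volume (symmDiff JourneSet JourneSet) = 0 := by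
    simp [symmDiff_self]
  constructor
  · refine ⟨JourneSet, hJmeas, hnull, phiT, phiT_meas, ?_, ?_⟩
    · apply Set.InvOn.bijOn (f' := psiT)
      · constructor
        · intro x hx
          rcases hx with ((h | h) | h) | h <;>
            simp only [mem_Ico] at h <;>
            unfold phiT psiT <;> split_ifs <;> linarith
        · intro y hy
          simp only [mem_Ico] at hy
          unfold phiT psiT <;> split_ifs <;> linarith
      · intro x hx
        rcases hx with ((h | h) | h) | h <;>
          simp only [mem_Ico] at h <;>
          unfold phiT <;> split_ifs <;> constructor <;> linarith
      · intro y hy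
        simp only [mem_Ico] at hy
        unfold psiT JourneSet
        split_ifs with h1 h2 h3
        · right; exact ⟨by linarith, by linarith⟩
        · left; right; exact ⟨by linarith, by linarith⟩
        · left; left; right; exact ⟨by linarith, by linarith⟩
        · left; left; left; exact ⟨by linarith, by linarith⟩
    · intro s hs
      rcases hs with ((h | h) | h) | h <;> simp only [mem_Ico] at h <;>
        unfold phiT <;> split_ifs
      all_goals first
        | linarith
        | (refine ⟨3, ?_⟩; push_cast; ring1)
        | (refine ⟨1, ?_⟩; push_cast; ring1)
        | (refine ⟨0, ?_⟩; push_cast; ring1)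
        | (refine ⟨-2, ?_⟩; push_cast; ring1)
  · refine ⟨JourneSet, hJmeas, hnull, phiD, phiD_meas, ?_, ?_⟩
    · apply Set.InvOn.bijOn (f' := psiD)
      · constructor
        · intro x hx
          rcases hx with ((h | h) | h) | h <;>
            simp only [mem_Ico] at h <;>
            unfold phiD psiD <;> split_ifs <;> linarith
        · intro y hy
          rcases hy with h | h <;> simp only [mem_Ico] at h <;>
            unfold phiD psiD <;> split_ifs <;> linarith
      · intro x hx
        rcases hx with ((h | h) | h) | h <;>
          simp only [mem_Ico] at h <;>
          unfold phiD <;> split_ifs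
        all_goals first
          | (left; refine ⟨by linarith, by linarith⟩)
          | (right; refine ⟨by linarith, by linarith⟩)
      · intro y hy
        rcases hy with h | h <;> simp only [mem_Ico] at h <;>
          unfold psiD JourneSet <;> split_ifs
        all_goals first
          | (left; left; left; refine ⟨by linarith, by linarith⟩)
          | (left; left; right; refine ⟨by linarith, by linarith⟩)
          | (left; right; refine ⟨by linarith, by linarith⟩)
          | (right; refine ⟨by linarith, by linarith⟩)
    · intro s hs
      rcases hs with ((h | h) | h) | h <;> simp only [mem_Ico] at h <;>
        unfold phiD <;> split_ifs
      all_goals first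
        | linarith
        | (refine ⟨-2, ?_⟩; rw [show ((2:ℝ)^(-2:ℤ)) = 1/4 by norm_num]; ring1)
        | (refine ⟨1, ?_⟩; rw [zpow_one])
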